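/- arXiv:2406.15714 — 2 statements merged into one kernel-verified Lean document; each statement's English description precedes it below -/
import Mathlib

section
/- Let k ≥ 1, let v₁,…,v_k > 0 be real battle values, let n > 0, and define the proportional allocation p*_j = n · v_j / (∑_{j'=1}^k v_{j'}) for each j ∈ {1,…,k}. Then for every allocation x ∈ ℝ^k with x_j ≥ 0 for all j and ∑_{j=1}^k x_j = n, one has ∑_{j=1}^k v_j · x_j/(x_j + p*_j) ≤ (1/2)·∑_{j=1}^k v_j, i.e., the proportional allocation is a best response to itself under the Popular Vote winning rule with equal budgets. -/
open Finset

/- Against an allocation `p` proportional to the battle values, the payoff `x ↦ x / (x + p)`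
of each battle is concave, so it lies below its tangent at `x = p`. Weighted by `v = c • p`,
these tangents all have the same slope `c / 4`, so summing them shows that moving budget
between battles cannot beat the value `1/2` per unit of `v` earned by matching `p`. -/

theorem div_add_le_half_add_tangent {x p : ℝ} (hx : 0 ≤ x) (hp : 0 < p) :
    x / (x + p) ≤ 1 / 2 + (x - p) / (4 * p) := by
  rw [div_le_iff₀ (by linarith)]
  have : 1 / 2 + (x - p) / (4 * p) = (x + p) / (4 * p) := by field_simp; ring
  rw [this, div_mul_eq_mul_div, le_div_iff₀ (by positivity)]
  nlinarith [sq_nonneg (x - p)]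

theorem sum_mul_div_add_le_half_sum_of_proportional {ι : Type*} {s : Finset ι}
    {v p x : ι → ℝ} {c : ℝ} (hc : 0 ≤ c) (hp : ∀ i ∈ s, 0 < p i) (hx : ∀ i ∈ s, 0 ≤ x i)
    (hv : ∀ i ∈ s, v i = c * p i) (hbudget : ∑ i ∈ s, x i ≤ ∑ i ∈ s, p i) :
    ∑ i ∈ s, v i * (x i / (x i + p i)) ≤ 1 / 2 * ∑ i ∈ s, v i := by
  have htangent : ∀ i ∈ s, v i * (x i / (x i + p i)) ≤ v i / 2 + c / 4 * (x i - p i) := by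
    intro i hi
    calc v i * (x i / (x i + p i))
        ≤ v i * (1 / 2 + (x i - p i) / (4 * p i)) :=
          mul_le_mul_of_nonneg_left (div_add_le_half_add_tangent (hx i hi) (hp i hi))
            (by rw [hv i hi]; exact mul_nonneg hc (hp i hi).le)
      _ = v i / 2 + c / 4 * (x i - p i) := by
          rw [hv i hi]; field_simp [(hp i hi).ne']
  calc ∑ i ∈ s, v i * (x i / (x i + p i))
      ≤ ∑ i ∈ s, (v i / 2 + c / 4 * (x i - p i)) := sum_le_sum htangent
    _ = 1 / 2 * ∑ i ∈ s, v i + c / 4 * (∑ i ∈ s, x i - ∑ i ∈ s, p i) := by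
        rw [sum_add_distrib, ← mul_sum, sum_sub_distrib, mul_sum]; ring_nf
    _ ≤ 1 / 2 * ∑ i ∈ s, v i := by
        linarith [mul_nonneg hc (sub_nonneg.mpr hbudget)]

/-- Under the Popular Vote winning rule with equal budgets, the proportional
allocation is a best response to itself: any feasible allocation `x` against
the proportional allocation `p*` earns at most half the total value. -/
theorem proportional_allocation_best_response
    (k : ℕ) (hk : 1 ≤ k) (v : Fin k → ℝ) (hv : ∀ j, 0 < v j)
    (n : ℝ) (hn : 0 < n)
    (pstar : Fin k → ℝ) (hpstar : ∀ j, pstar j = n * v j / ∑ j', v j')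
    (x : Fin k → ℝ) (hx : ∀ j, 0 ≤ x j) (hxsum : ∑ j, x j = n) :
    ∑ j, v j * (x j / (x j + pstar j)) ≤ (1 / 2) * ∑ j, v j := by
  set V := ∑ j', v j'
  have hV : 0 < V := sum_pos (fun j _ => hv j) (univ_nonempty_iff.mpr ⟨⟨0, hk⟩⟩)
  have hpsum : ∑ j, pstar j = n := by
    simp only [hpstar, ← sum_div, ← mul_sum]
    exact mul_div_cancel_right₀ n hV.ne'
  refine sum_mul_div_add_le_half_sum_of_proportional (c := V / n) (by positivity)
    (fun j _ => ?_) (fun j _ => hx j) (fun j _ => ?_) (by rw [hxsum, hpsum])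
  · rw [hpstar j]; exact div_pos (mul_pos hn (hv j)) hV
  · rw [hpstar j]; field_simp
end

section
/- Let k ≥ 1, let v₁,…,v_k > 0 be real battle values, let n > 0, and define the proportional allocation p*_j = n · v_j / (∑_{j'=1}^k v_{j'}). Then the pair (p*, p*) is a pure Nash equilibrium of the continuous Popular Vote Colonel Blotto game with equal budgets n: for every x ∈ ℝ^k with x ≥ 0 and ∑_j x_j = n and every y ∈ ℝ^k with y ≥ 0 and ∑_j y_j = n, ∑_{j=1}^k v_j · x_j/(x_j + p*_j) ≤ ∑_{j=1}^k v_j · p*_j/(p*_j + p*_j) ≤ ∑_{j=1}^k v_j · p*_j/(p*_j + y_j), and the equilibrium payoff of each player equals (1/2)·∑_{j=1}^k v_j. -/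
/-!
Against an opponent allocation `p > 0`, the share `x ↦ x / (x + p)` is concave, so it lies
below its tangent at `x = p`; weighted by `p`, the tangent is `p / 2 + (x - p) / 4`. When the
battle values are proportional to `p`, summing these tangents over all battles makes the linear
terms cancel on the budget hyperplane `∑ x = ∑ p`, so no deviation earns more than half of the
total value. The opponent's side is the same inequality, since `p / (p + y) = 1 - y / (y + p)`.
-/

open Finset

lemma mul_div_add_le_tangent {p x : ℝ} (hxp : 0 < x + p) :
    p * (x / (x + p)) ≤ p / 2 + (x - p) / 4 := by
  have hgap : p / 2 + (x - p) / 4 - p * (x / (x + p)) = (x - p) ^ 2 / (4 * (x + p)) := by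
    field_simp
    ring
  have : 0 ≤ (x - p) ^ 2 / (4 * (x + p)) := by positivity
  linarith

section

variable {ι : Type*} {s : Finset ι} {p : ι → ℝ}

lemma sum_mul_div_add_le_half_sum (hp : ∀ j ∈ s, 0 < p j) {x : ι → ℝ}
    (hx : ∀ j ∈ s, 0 ≤ x j) (hsum : ∑ j ∈ s, x j = ∑ j ∈ s, p j) :
    ∑ j ∈ s, p j * (x j / (x j + p j)) ≤ (∑ j ∈ s, p j) / 2 :=
  calc ∑ j ∈ s, p j * (x j / (x j + p j))
      ≤ ∑ j ∈ s, (p j / 2 + (x j - p j) / 4) :=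
        sum_le_sum fun j hj =>
          mul_div_add_le_tangent (by linarith [hp j hj, hx j hj])
    _ = (∑ j ∈ s, p j) / 2 + (∑ j ∈ s, x j - ∑ j ∈ s, p j) / 4 := by
        rw [sum_add_distrib, ← sum_div, ← sum_div, sum_sub_distrib]
    _ = (∑ j ∈ s, p j) / 2 := by rw [hsum]; ring

lemma half_sum_le_sum_mul_div_add (hp : ∀ j ∈ s, 0 < p j) {y : ι → ℝ}
    (hy : ∀ j ∈ s, 0 ≤ y j) (hsum : ∑ j ∈ s, y j = ∑ j ∈ s, p j) :
    (∑ j ∈ s, p j) / 2 ≤ ∑ j ∈ s, p j * (p j / (p j + y j)) := by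
  have hcompl : ∀ j ∈ s, p j * (p j / (p j + y j)) = p j - p j * (y j / (y j + p j)) := by
    intro j hj
    have : y j + p j ≠ 0 := by linarith [hp j hj, hy j hj]
    rw [add_comm (p j)]
    field_simp
    ring
  rw [sum_congr rfl hcompl, sum_sub_distrib]
  linarith [sum_mul_div_add_le_half_sum hp hy hsum]

end

/-- The pair `(p*, p*)` of proportional allocations is a pure Nash equilibrium
of the continuous Popular Vote Colonel Blotto game with equal budgets, with
equilibrium payoff half the total value. -/
theorem proportional_allocation_nash_equilibrium
    (k : ℕ) (hk : 1 ≤ k) (v : Fin k → ℝ) (hv : ∀ j, 0 < v j)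
    (n : ℝ) (hn : 0 < n)
    (pstar : Fin k → ℝ) (hpstar : ∀ j, pstar j = n * v j / ∑ j', v j') :
    (∀ x : Fin k → ℝ, (∀ j, 0 ≤ x j) → ∑ j, x j = n →
        ∑ j, v j * (x j / (x j + pstar j)) ≤
          ∑ j, v j * (pstar j / (pstar j + pstar j))) ∧
    (∀ y : Fin k → ℝ, (∀ j, 0 ≤ y j) → ∑ j, y j = n →
        ∑ j, v j * (pstar j / (pstar j + pstar j)) ≤
          ∑ j, v j * (pstar j / (pstar j + y j))) ∧
    ∑ j, v j * (pstar j / (pstar j + pstar j)) = (1 / 2) * ∑ j, v j := by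
  set V := ∑ j', v j'
  have hV : 0 < V := sum_pos (fun j _ => hv j) ⟨⟨0, hk⟩, mem_univ _⟩
  have hp : ∀ j ∈ univ, 0 < pstar j := fun j _ => by
    rw [hpstar j]; exact div_pos (mul_pos hn (hv j)) hV
  have hv_eq : ∀ j, v j = V / n * pstar j := fun j => by
    rw [hpstar j]; field_simp
  have hsum : ∑ j, pstar j = n := by
    simp_rw [hpstar, ← sum_div, ← mul_sum]
    exact mul_div_cancel_right₀ n hV.ne'
  have hscale : ∀ f : Fin k → ℝ, ∑ j, v j * f j = V / n * ∑ j, pstar j * f j := fun f => by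
    simp_rw [mul_sum, hv_eq, mul_assoc]
  have hhalf : V / n * ((∑ j, pstar j) / 2) = (1 / 2) * V := by rw [hsum]; field_simp
  have hself : ∀ j ∈ univ, pstar j * (pstar j / (pstar j + pstar j)) = pstar j / 2 :=
    fun j hj => by field_simp [(hp j hj).ne']; ring
  have hmid : ∑ j, v j * (pstar j / (pstar j + pstar j)) = (1 / 2) * V := by
    rw [hscale, sum_congr rfl hself, ← sum_div, hhalf]
  refine ⟨fun x hx hxs => ?_, fun y hy hys => ?_, hmid⟩
  · rw [hmid, hscale, ← hhalf]
    gcongr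
    exact sum_mul_div_add_le_half_sum hp (fun j _ => hx j) (hxs.trans hsum.symm)
  · rw [hmid, hscale, ← hhalf]
    gcongr
    exact half_sum_le_sum_mul_div_add hp (fun j _ => hy j) (hys.trans hsum.symm)
end
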